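/- Let ω(x,t) be a real function with continuous second derivatives, and define the 2×2 matrix functions Ğ = −i( (ω_t/4) j + (1/2) sin(ω/2) J ) and F̆ = −i(ω_x/4) j + (1/2) cos(ω/2) J j, where J = [[0,1],[1,0]] and j = diag(1,−1). Then ω satisfies the sine-Gordon equation in laboratory coordinates, ω_xx − ω_tt = sin ω, if and only if the zero-curvature (compatibility) condition Ğ_t − F̆_x + Ğ F̆ − F̆ Ğ = 0 holds. -/

import Mathlib

open Complex Matrix Function Set
open scoped Matrix.Norms.L2Operator

/-- The matrix `J = [[0,1],[1,0]]`. -/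
noncomputable def Jmat : Matrix (Fin 2) (Fin 2) ℂ := !![0, 1; 1, 0]

/-- The signature matrix `j = diag(1,−1)`. -/
noncomputable def jmat : Matrix (Fin 2) (Fin 2) ℂ := !![1, 0; 0, -1]

/-- `Ğ = −i((ω_t/4) j + (1/2) sin(ω/2) J)` (y43). -/
noncomputable def Gbreve (ω ωt : ℝ → ℝ → ℝ) (x t : ℝ) : Matrix (Fin 2) (Fin 2) ℂ :=
  (-Complex.I) • (((ωt x t / 4 : ℝ) : ℂ) • jmat +
    ((Real.sin (ω x t / 2) / 2 : ℝ) : ℂ) • Jmat)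

/-- `F̆ = −i(ω_x/4) j + (1/2) cos(ω/2) J j` (y43). -/
noncomputable def Fbreve (ω ωx : ℝ → ℝ → ℝ) (x t : ℝ) : Matrix (Fin 2) (Fin 2) ℂ :=
  (-Complex.I * ((ωx x t / 4 : ℝ) : ℂ)) • jmat +
    ((Real.cos (ω x t / 2) / 2 : ℝ) : ℂ) • (Jmat * jmat)

/-!
Since `j` and `J` square to `1` and anticommute, the commutator of `a j + s J` with `b j + c J j`
is again a combination of `j`, `J` and `J j`. For the pair `(Ğ, F̆)` its `J`- and `J j`-parts
cancel those of `Ğ_t − F̆_x`, and by the double-angle formula the curvature collapses to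
`(i/4)(ω_xx − ω_tt − sin ω) j`, which vanishes exactly when ω solves the sine-Gordon equation.
-/

lemma jmat_ne_zero : jmat ≠ 0 := fun h => by
  simpa [jmat] using congrFun (congrFun h 0) 0

lemma commutator_jmat_Jmat (a s b c : ℂ) :
    (a • jmat + s • Jmat) * (b • jmat + c • (Jmat * jmat)) -
        (b • jmat + c • (Jmat * jmat)) * (a • jmat + s • Jmat) =
      (2 * s * c) • jmat - (2 * a * c) • Jmat + (2 * s * b) • (Jmat * jmat) := by
  ext i k
  fin_cases i <;> fin_cases k <;> simp [jmat, Jmat] <;> ring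

section SineGordon

variable {ω ωx ωt ωxx ωtt : ℝ → ℝ → ℝ} {x t : ℝ}

lemma Gbreve_eq :
    Gbreve ω ωt x t =
      (-I * (ωt x t / 4 : ℝ)) • jmat + (-I * (Real.sin (ω x t / 2) / 2 : ℝ)) • Jmat := by
  rw [Gbreve, smul_add, smul_smul, smul_smul]

lemma hasDerivAt_Gbreve (hωt : HasDerivAt (fun s => ω x s) (ωt x t) t)
    (hωtt : HasDerivAt (fun s => ωt x s) (ωtt x t) t) :
    HasDerivAt (fun s => Gbreve ω ωt x s)
      ((-I) • (((ωtt x t / 4 : ℝ) : ℂ) • jmat +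
        ((Real.cos (ω x t / 2) * (ωt x t / 2) / 2 : ℝ) : ℂ) • Jmat)) t :=
  ((((hωtt.div_const 4).ofReal_comp).smul_const jmat).add
    ((((hωt.div_const 2).sin.div_const 2).ofReal_comp).smul_const Jmat)).const_smul (-I)

lemma hasDerivAt_Fbreve (hωx : HasDerivAt (fun s => ω s t) (ωx x t) x)
    (hωxx : HasDerivAt (fun s => ωx s t) (ωxx x t) x) :
    HasDerivAt (fun s => Fbreve ω ωx s t)
      ((-I * ((ωxx x t / 4 : ℝ) : ℂ)) • jmat +
        ((-Real.sin (ω x t / 2) * (ωx x t / 2) / 2 : ℝ) : ℂ) • (Jmat * jmat)) x :=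
  ((((hωxx.div_const 4).ofReal_comp).const_mul (-I)).smul_const jmat).add
    ((((hωx.div_const 2).cos.div_const 2).ofReal_comp).smul_const (Jmat * jmat))

lemma zeroCurvature_eq {Gt Fx : Matrix (Fin 2) (Fin 2) ℂ}
    (hωx : HasDerivAt (fun s => ω s t) (ωx x t) x)
    (hωt : HasDerivAt (fun s => ω x s) (ωt x t) t)
    (hωxx : HasDerivAt (fun s => ωx s t) (ωxx x t) x)
    (hωtt : HasDerivAt (fun s => ωt x s) (ωtt x t) t)
    (hGt : HasDerivAt (fun s => Gbreve ω ωt x s) Gt t)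
    (hFx : HasDerivAt (fun s => Fbreve ω ωx s t) Fx x) :
    Gt - Fx + Gbreve ω ωt x t * Fbreve ω ωx x t - Fbreve ω ωx x t * Gbreve ω ωt x t =
      (I / 4 * ((ωxx x t - ωtt x t - Real.sin (ω x t) : ℝ) : ℂ)) • jmat := by
  rw [hGt.unique (hasDerivAt_Gbreve hωt hωtt), hFx.unique (hasDerivAt_Fbreve hωx hωxx),
    add_sub_assoc, Gbreve_eq, Fbreve, commutator_jmat_Jmat]
  have hsin : Real.sin (ω x t) = 2 * Real.sin (ω x t / 2) * Real.cos (ω x t / 2) := by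
    rw [← Real.sin_two_mul, mul_div_cancel₀ _ two_ne_zero]
  rw [hsin]
  push_cast
  match_scalars
  · ring
  · ring
  · linear_combination (sin (ω x t / 2) * ωx x t / 4) * I_sq

end SineGordon

theorem sineGordon_iff_zeroCurvature_general
    (ω ωx ωt ωxx ωtt : ℝ → ℝ → ℝ)
    (hωx : ∀ x t : ℝ, HasDerivAt (fun s => ω s t) (ωx x t) x)
    (hωt : ∀ x t : ℝ, HasDerivAt (fun s => ω x s) (ωt x t) t)
    (hωxx : ∀ x t : ℝ, HasDerivAt (fun s => ωx s t) (ωxx x t) x)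
    (hωtt : ∀ x t : ℝ, HasDerivAt (fun s => ωt x s) (ωtt x t) t)
    (Gt Fx : ℝ → ℝ → Matrix (Fin 2) (Fin 2) ℂ)
    (hGt : ∀ x t : ℝ, HasDerivAt (fun s => Gbreve ω ωt x s) (Gt x t) t)
    (hFx : ∀ x t : ℝ, HasDerivAt (fun s => Fbreve ω ωx s t) (Fx x t) x) :
    (∀ x t : ℝ, ωxx x t - ωtt x t = Real.sin (ω x t)) ↔
    (∀ x t : ℝ,
      Gt x t - Fx x t + Gbreve ω ωt x t * Fbreve ω ωx x t -
        Fbreve ω ωx x t * Gbreve ω ωt x t = 0) := by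
  simp [zeroCurvature_eq (hωx _ _) (hωt _ _) (hωxx _ _) (hωtt _ _) (hGt _ _) (hFx _ _),
    jmat_ne_zero, -ofReal_sub, sub_eq_zero]

/-- The sine-Gordon equation (y36) is equivalent to the zero curvature
(compatibility) condition `Ğ_t − F̆_x + Ğ F̆ − F̆ Ğ = 0` for the pair (y43). -/
theorem sineGordon_iff_zeroCurvature
    (ω ωx ωt ωxx ωtt : ℝ → ℝ → ℝ)
    (hω : ContDiff ℝ 2 (uncurry ω))
    (hωx : ∀ x t : ℝ, HasDerivAt (fun s => ω s t) (ωx x t) x)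
    (hωt : ∀ x t : ℝ, HasDerivAt (fun s => ω x s) (ωt x t) t)
    (hωxx : ∀ x t : ℝ, HasDerivAt (fun s => ωx s t) (ωxx x t) x)
    (hωtt : ∀ x t : ℝ, HasDerivAt (fun s => ωt x s) (ωtt x t) t)
    (Gt Fx : ℝ → ℝ → Matrix (Fin 2) (Fin 2) ℂ)
    (hGt : ∀ x t : ℝ, HasDerivAt (fun s => Gbreve ω ωt x s) (Gt x t) t)
    (hFx : ∀ x t : ℝ, HasDerivAt (fun s => Fbreve ω ωx s t) (Fx x t) x) :
    (∀ x t : ℝ, ωxx x t - ωtt x t = Real.sin (ω x t)) ↔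
    (∀ x t : ℝ,
      Gt x t - Fx x t + Gbreve ω ωt x t * Fbreve ω ωx x t -
        Fbreve ω ωx x t * Gbreve ω ωt x t = 0) :=
  sineGordon_iff_zeroCurvature_general ω ωx ωt ωxx ωtt hωx hωt hωxx hωtt Gt Fx hGt hFx
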